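/- The support lattice of a torus modular invariant is even and self-dual: let Z be a modular invariant for the lattice data (i.e. {0,1}-valued, additive, commuting with S and T, Z_{[0],[0]}=1), and define the set 𝓛 = ⋃ {(u;v) ∈ L* × L* : Z_{[u],[v]} = 1} ⊆ R^{n,n}, equipped with the indefinite form (u;v)·(u';v') = u·u' − v·v'. Then 𝓛 is an even self-dual lattice containing (L;L). -/

import Mathlib

/-!
The support `𝓛` is closed under addition because `Z` is, and under negation because `L*/L` is
finite. Commuting with the diagonal `T` forces `T_{[u]} = T_{[v]}` whenever `Z_{[u],[v]} = 1`,
i.e. `u·u - v·v ∈ 2ℤ`; with `L` even this holds for every point of `𝓛`, and polarisation gives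
`𝓛 ⊆ 𝓛*`. Conversely, an even lattice is discrete, so a spanning one satisfies `L** = L`; this
makes `S` unitary and turns `ZS = SZ` into `Z = S Z S†`, i.e.
`Z_{[x],[y]} = |L*/L|⁻¹ ∑ Z_{[c],[b]} e(x·c - y·b)`. For `(x;y) ∈ 𝓛*` every phase in this sum is
`1`, so `Z_{[x],[y]} = Z_{[0],[0]} = 1`.
-/

open scoped BigOperators
open Complex

noncomputable section

/-- The Euclidean dot product on `Fin n → ℝ`. -/
def dotR {n : ℕ} (u v : Fin n → ℝ) : ℝ := ∑ i, u i * v i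

lemma dotR_add_left {n : ℕ} (u v w : Fin n → ℝ) :
    dotR (u + v) w = dotR u w + dotR v w := by
  simp [dotR, add_mul, Finset.sum_add_distrib]

lemma dotR_neg_left {n : ℕ} (u w : Fin n → ℝ) : dotR (-u) w = -dotR u w := by
  simp [dotR]

/-- `L` is an even lattice: `u ⬝ u ∈ 2ℤ` for all `u ∈ L`. -/
def IsEvenLattice {n : ℕ} (L : AddSubgroup (Fin n → ℝ)) : Prop :=
  ∀ u ∈ L, ∃ m : ℤ, dotR u u = 2 * m

/-- The dual lattice `L* = {x : x ⬝ L ⊆ ℤ}`. -/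
def dualLattice {n : ℕ} (L : AddSubgroup (Fin n → ℝ)) : AddSubgroup (Fin n → ℝ) where
  carrier := {x | ∀ l ∈ L, ∃ m : ℤ, dotR x l = m}
  zero_mem' := fun l _ => ⟨0, by simp [dotR]⟩
  add_mem' := by
    intro a b ha hb l hl
    obtain ⟨m, hm⟩ := ha l hl
    obtain ⟨m', hm'⟩ := hb l hl
    exact ⟨m + m', by rw [dotR_add_left, hm, hm']; push_cast; ring⟩
  neg_mem' := by
    intro a ha l hl
    obtain ⟨m, hm⟩ := ha l hl
    exact ⟨-m, by rw [dotR_neg_left, hm]; push_cast; ring⟩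

/-- The group of primaries `L*/L`. -/
abbrev latQuot {n : ℕ} (L : AddSubgroup (Fin n → ℝ)) :=
  dualLattice L ⧸ (L.addSubgroupOf (dualLattice L))

/-- The class of an element of `L*` in `L*/L`. -/
def mkQ {n : ℕ} (L : AddSubgroup (Fin n → ℝ)) (x : dualLattice L) : latQuot L :=
  QuotientAddGroup.mk x

/-- The S-matrix of the lattice chiral data:
`S_{[u],[v]} = |L*/L|^{-1/2} exp(2 π i u⬝v)`. -/
def Smat {n : ℕ} (L : AddSubgroup (Fin n → ℝ)) [Fintype (latQuot L)] :
    Matrix (latQuot L) (latQuot L) ℂ := fun x y =>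
  (((Real.sqrt (Fintype.card (latQuot L)))⁻¹ : ℝ) : ℂ) *
    Complex.exp (2 * Real.pi * Complex.I *
      (dotR ((Quotient.out x : dualLattice L) : Fin n → ℝ)
            ((Quotient.out y : dualLattice L) : Fin n → ℝ)))

open scoped Classical in
/-- The T-matrix of the lattice chiral data:
`T_{[u],[u]} = exp(π i u⬝u - π i n/12)`, diagonal. -/
def Tmat {n : ℕ} (L : AddSubgroup (Fin n → ℝ)) :
    Matrix (latQuot L) (latQuot L) ℂ := fun x y =>
  if x = y then
    Complex.exp (Real.pi * Complex.I *
        (dotR ((Quotient.out x : dualLattice L) : Fin n → ℝ)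
              ((Quotient.out x : dualLattice L) : Fin n → ℝ))
      - Real.pi * Complex.I * n / 12)
  else 0

/-- The hyperbolic (signature `(n,n)`) bilinear form
`(u;v)·(u';v') = u·u' − v·v'` on `ℝ^{n,n}`. -/
def hform {n : ℕ} (p q : (Fin n → ℝ) × (Fin n → ℝ)) : ℝ :=
  dotR p.1 q.1 - dotR p.2 q.2

/-- The support set `𝓛 = ⋃ {(u;v) : Z_{[u],[v]} = 1} ⊆ ℝ^{n,n}` of a modular
invariant `Z`. -/
def suppSet {n : ℕ} (L : AddSubgroup (Fin n → ℝ))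
    (Z : latQuot L → latQuot L → ℕ) : Set ((Fin n → ℝ) × (Fin n → ℝ)) :=
  {p | ∃ (h1 : p.1 ∈ dualLattice L) (h2 : p.2 ∈ dualLattice L),
      Z (mkQ L ⟨p.1, h1⟩) (mkQ L ⟨p.2, h2⟩) = 1}


open Matrix ComplexConjugate

lemma exists_intCast_eq_of_add_two_mul_add {x y c : ℝ} (hx : ∃ m : ℤ, x = 2 * m)
    (hy : ∃ m : ℤ, y = 2 * m) (hxy : ∃ m : ℤ, x + 2 * c + y = 2 * m) : ∃ m : ℤ, c = m := by
  obtain ⟨a, rfl⟩ := hx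
  obtain ⟨b, rfl⟩ := hy
  obtain ⟨d, hd⟩ := hxy
  exact ⟨d - a - b, by push_cast; linarith⟩

lemma AddSubmonoid.neg_mem_of_finite {G : Type*} [AddGroup G] [Finite G] (S : AddSubmonoid G)
    {p : G} (hp : p ∈ S) : -p ∈ S :=
  AddSubmonoid.multiples_le.2 hp
    (mem_multiples_iff_mem_zmultiples.2 (neg_mem (AddSubgroup.mem_zmultiples p)))

lemma Fintype.sum_eq_zero_of_map_add_right_eq_mul {G R : Type*} [AddGroup G] [Fintype G]
    [CommRing R] [IsDomain R] {f : G → R} {c : R} (t : G) (hc : c ≠ 1)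
    (hf : ∀ b, f (b + t) = c * f b) : ∑ b, f b = 0 := by
  have hfix : ∑ b, f b = c * ∑ b, f b := by
    rw [Finset.mul_sum, ← Equiv.sum_comp (Equiv.addRight t)]
    exact Finset.sum_congr rfl fun b _ => hf b
  have : (c - 1) * ∑ b, f b = 0 := by linear_combination -hfix
  exact (mul_eq_zero.1 this).resolve_left (sub_ne_zero.2 hc)

def expTwoPiI (r : ℝ) : ℂ := Complex.exp (2 * Real.pi * Complex.I * r)

lemma expTwoPiI_add (r s : ℝ) : expTwoPiI (r + s) = expTwoPiI r * expTwoPiI s := by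
  simp only [expTwoPiI, Complex.ofReal_add, mul_add, Complex.exp_add]

lemma conj_expTwoPiI (r : ℝ) : conj (expTwoPiI r) = expTwoPiI (-r) := by
  simp only [expTwoPiI, ← Complex.exp_conj, map_mul, Complex.conj_ofReal, Complex.conj_I,
    map_ofNat, Complex.ofReal_neg]
  ring_nf

lemma expTwoPiI_sub (r s : ℝ) : expTwoPiI (r - s) = expTwoPiI r * conj (expTwoPiI s) := by
  rw [sub_eq_add_neg, expTwoPiI_add, conj_expTwoPiI]

lemma expTwoPiI_eq_one_iff (r : ℝ) : expTwoPiI r = 1 ↔ ∃ m : ℤ, r = m := by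
  rw [expTwoPiI, Complex.exp_eq_one_iff]
  refine exists_congr fun m => ?_
  rw [show 2 * (Real.pi : ℂ) * Complex.I * r = r * (2 * Real.pi * Complex.I) by ring,
    mul_left_inj' Complex.two_pi_I_ne_zero]
  exact_mod_cast Iff.rfl

lemma expTwoPiI_intCast (m : ℤ) : expTwoPiI m = 1 := (expTwoPiI_eq_one_iff _).2 ⟨m, rfl⟩

lemma sq_ofReal_inv_sqrt_natCast (N : ℕ) : (((Real.sqrt N)⁻¹ : ℝ) : ℂ) ^ 2 = (N : ℂ)⁻¹ := by
  rw [← Complex.ofReal_pow, inv_pow, Real.sq_sqrt N.cast_nonneg, Complex.ofReal_inv,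
    Complex.ofReal_natCast]

section Lattice

variable {n : ℕ} {L : AddSubgroup (Fin n → ℝ)}

lemma dotR_eq_dotProduct (u v : Fin n → ℝ) : dotR u v = u ⬝ᵥ v := rfl

lemma dotR_comm (u v : Fin n → ℝ) : dotR u v = dotR v u := dotProduct_comm u v

lemma dotR_sub_left (u v w : Fin n → ℝ) : dotR (u - v) w = dotR u w - dotR v w :=
  sub_dotProduct u v w

lemma dotR_add_self (u v : Fin n → ℝ) :
    dotR (u + v) (u + v) = dotR u u + 2 * dotR u v + dotR v v := by
  simp only [dotR_eq_dotProduct, add_dotProduct, dotProduct_add, dotProduct_comm v u]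
  ring

lemma hform_add_self (p q : (Fin n → ℝ) × (Fin n → ℝ)) :
    hform (p + q) (p + q) = hform p p + 2 * hform p q + hform q q := by
  simp only [hform, Prod.fst_add, Prod.snd_add, dotR_add_self]
  ring

lemma IsEvenLattice.le_dualLattice (hEven : IsEvenLattice L) : L ≤ dualLattice L :=
  fun u hu v hv => exists_intCast_eq_of_add_two_mul_add (hEven u hu) (hEven v hv)
    (by rw [← dotR_add_self]; exact hEven _ (add_mem hu hv))

lemma IsEvenLattice.exists_dotR_self_sub_dotR_self (hEven : IsEvenLattice L)
    {u u' : Fin n → ℝ} (hu' : u' ∈ dualLattice L) (h : u - u' ∈ L) :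
    ∃ m : ℤ, dotR u u - dotR u' u' = 2 * m := by
  obtain ⟨a, ha⟩ := hEven _ h
  obtain ⟨b, hb⟩ := hu' _ h
  refine ⟨a + b, ?_⟩
  have := dotR_add_self u' (u - u')
  rw [add_sub_cancel, ha, hb] at this
  push_cast
  linarith

lemma IsEvenLattice.eq_zero_of_dotR_self_lt_one (hEven : IsEvenLattice L) {u : Fin n → ℝ}
    (hu : u ∈ L) (hlt : dotR u u < 1) : u = 0 := by
  obtain ⟨m, hm⟩ := hEven u hu
  have hm0 : m = 0 := by
    have hnonneg : 0 ≤ dotR u u := Finset.sum_nonneg fun i _ => mul_self_nonneg (u i)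
    have h0 : (0 : ℝ) ≤ m := by linarith
    have h1 : (m : ℝ) < 1 := by linarith
    norm_cast at h0 h1
    omega
  rw [hm0, Int.cast_zero, mul_zero] at hm
  exact dotProduct_self_eq_zero.1 hm

lemma IsEvenLattice.discreteTopology (hEven : IsEvenLattice L) :
    DiscreteTopology (AddSubgroup.toIntSubmodule L) := by
  refine discreteTopology_of_isOpen_singleton_zero ?_
  have hopen : IsOpen {u : Fin n → ℝ | dotR u u < 1} :=
    isOpen_lt (by unfold dotR; fun_prop) continuous_const
  convert hopen.preimage continuous_subtype_val
  ext ⟨u, hu⟩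
  refine ⟨fun h => ?_, fun h => Subtype.ext (hEven.eq_zero_of_dotR_self_lt_one hu h)⟩
  obtain rfl : u = 0 := congrArg Subtype.val h
  simp [dotR]

lemma toIntSubmodule_dualLattice (L : AddSubgroup (Fin n → ℝ)) :
    AddSubgroup.toIntSubmodule (dualLattice L) =
      LinearMap.BilinForm.dualSubmodule (dotProductBilin ℝ ℝ) (AddSubgroup.toIntSubmodule L) := by
  ext x
  simp only [LinearMap.BilinForm.mem_dualSubmodule, Submodule.mem_one,
    dotProductBilin_apply_apply, algebraMap_int_eq, eq_intCast]
  exact forall₂_congr fun _ _ => exists_congr fun _ => eq_comm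

lemma IsEvenLattice.dualLattice_dualLattice (hEven : IsEvenLattice L)
    (hspan : Submodule.span ℝ (L : Set (Fin n → ℝ)) = ⊤) : dualLattice (dualLattice L) = L := by
  have := hEven.discreteTopology
  have : IsZLattice ℝ (AddSubgroup.toIntSubmodule L) := ⟨hspan⟩
  have hb := (Module.Free.chooseBasis ℤ (AddSubgroup.toIntSubmodule L)).ofZLatticeBasis_span ℝ
  apply AddSubgroup.toIntSubmodule.injective
  rw [toIntSubmodule_dualLattice, toIntSubmodule_dualLattice, ← hb,
    LinearMap.BilinForm.dualSubmodule_dualSubmodule_of_basis]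
  · exact ⟨fun x hx => dotProduct_self_eq_zero.1 (hx x),
      fun x hx => dotProduct_self_eq_zero.1 (hx x)⟩
  · exact ⟨fun x y => dotProduct_comm x y⟩

end Lattice

def rep {n : ℕ} (L : AddSubgroup (Fin n → ℝ)) (a : latQuot L) : Fin n → ℝ :=
  ((Quotient.out a : dualLattice L) : Fin n → ℝ)

section Quotient

variable {n : ℕ} {L : AddSubgroup (Fin n → ℝ)}

lemma rep_mem (a : latQuot L) : rep L a ∈ dualLattice L := (Quotient.out a).2

lemma mkQ_rep (a : latQuot L) : mkQ L ⟨rep L a, rep_mem a⟩ = a := Quotient.out_eq a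

lemma mkQ_zero : mkQ L 0 = 0 := rfl

lemma mkQ_add (x y : dualLattice L) : mkQ L (x + y) = mkQ L x + mkQ L y := rfl

lemma mkQ_eq_zero_iff (x : dualLattice L) : mkQ L x = 0 ↔ (x : Fin n → ℝ) ∈ L := by
  rw [mkQ, QuotientAddGroup.eq_zero_iff, AddSubgroup.mem_addSubgroupOf]

lemma mkQ_eq_mkQ_iff (x y : dualLattice L) : mkQ L x = mkQ L y ↔ (x : Fin n → ℝ) - y ∈ L := by
  rw [mkQ, mkQ, QuotientAddGroup.eq_iff_sub_mem, AddSubgroup.mem_addSubgroupOf,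
    AddSubgroup.coe_sub]

lemma rep_mkQ_sub_mem (x : dualLattice L) : rep L (mkQ L x) - x ∈ L :=
  (mkQ_eq_mkQ_iff _ x).1 (mkQ_rep _)

lemma rep_sub_rep_mem_iff (a b : latQuot L) : rep L a - rep L b ∈ L ↔ a = b := by
  rw [← mkQ_eq_mkQ_iff ⟨_, rep_mem a⟩ ⟨_, rep_mem b⟩, mkQ_rep, mkQ_rep]

lemma expTwoPiI_dotR_eq_of_sub_mem {u u' w : Fin n → ℝ} (h : u - u' ∈ L)
    (hw : w ∈ dualLattice L) : expTwoPiI (dotR u w) = expTwoPiI (dotR u' w) := by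
  obtain ⟨m, hm⟩ := hw _ h
  rw [← sub_add_cancel (dotR u w) (dotR u' w), ← dotR_sub_left, dotR_comm, hm, add_comm,
    expTwoPiI_add, expTwoPiI_intCast, mul_one]

lemma expTwoPiI_dotR_rep_mkQ (x : dualLattice L) {w : Fin n → ℝ} (hw : w ∈ dualLattice L) :
    expTwoPiI (dotR (rep L (mkQ L x)) w) = expTwoPiI (dotR x w) :=
  expTwoPiI_dotR_eq_of_sub_mem (rep_mkQ_sub_mem x) hw

open scoped Classical in
lemma sum_expTwoPiI_dotR_rep [Fintype (latQuot L)] (hEven : IsEvenLattice L)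
    (hspan : Submodule.span ℝ (L : Set (Fin n → ℝ)) = ⊤) {w : Fin n → ℝ}
    (hw : w ∈ dualLattice L) :
    ∑ b : latQuot L, expTwoPiI (dotR (rep L b) w) =
      if w ∈ L then (Fintype.card (latQuot L) : ℂ) else 0 := by
  split_ifs with hwL
  · have hone (b : latQuot L) : expTwoPiI (dotR (rep L b) w) = 1 := by
      obtain ⟨m, hm⟩ := rep_mem b w hwL
      rw [hm, expTwoPiI_intCast]
    simp [hone]
  · rw [← hEven.dualLattice_dualLattice hspan] at hwL
    obtain ⟨v, hv, hvw⟩ : ∃ v ∈ dualLattice L, ¬∃ m : ℤ, dotR w v = m := by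
      simpa [dualLattice] using hwL
    -- translating the summation variable by `[v]` multiplies every term by `e(v·w) ≠ 1`
    refine Fintype.sum_eq_zero_of_map_add_right_eq_mul (mkQ L ⟨v, hv⟩)
      (c := expTwoPiI (dotR v w)) (fun h => hvw ?_) fun b => ?_
    · rw [dotR_comm]
      exact (expTwoPiI_eq_one_iff _).1 h
    · have hsum : mkQ L (Quotient.out b + ⟨v, hv⟩) = b + mkQ L ⟨v, hv⟩ := by
        rw [mkQ_add]
        exact congrArg (· + _) (mkQ_rep b)
      rw [← hsum, expTwoPiI_dotR_rep_mkQ _ hw, AddSubgroup.coe_add, dotR_add_left, add_comm,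
        expTwoPiI_add]
      rfl

end Quotient

section ModularMatrices

variable {n : ℕ} {L : AddSubgroup (Fin n → ℝ)}

lemma Smat_apply [Fintype (latQuot L)] (a b : latQuot L) :
    Smat L a b = (((Real.sqrt (Fintype.card (latQuot L)))⁻¹ : ℝ) : ℂ) *
      expTwoPiI (dotR (rep L a) (rep L b)) := rfl

lemma Smat_mul_conjTranspose_Smat [Fintype (latQuot L)] [DecidableEq (latQuot L)]
    (hEven : IsEvenLattice L) (hspan : Submodule.span ℝ (L : Set (Fin n → ℝ)) = ⊤) :
    Smat L * (Smat L)ᴴ = 1 := by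
  ext a b
  have hterm (c : latQuot L) : Smat L a c * star (Smat L b c) =
      ((Fintype.card (latQuot L) : ℂ))⁻¹ * expTwoPiI (dotR (rep L c) (rep L a - rep L b)) := by
    rw [Smat_apply, Smat_apply, star_mul', Complex.star_def, Complex.conj_ofReal, dotR_comm,
      dotR_comm (rep L b), dotR_eq_dotProduct, dotR_eq_dotProduct, dotR_eq_dotProduct,
      dotProduct_sub, expTwoPiI_sub, ← sq_ofReal_inv_sqrt_natCast]
    ring
  simp only [Matrix.mul_apply, Matrix.conjTranspose_apply, hterm, ← Finset.mul_sum,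
    sum_expTwoPiI_dotR_rep hEven hspan (sub_mem (rep_mem a) (rep_mem b)),
    rep_sub_rep_mem_iff, Matrix.one_apply]
  split_ifs <;> simp

lemma apply_eq_sum_of_commute_Smat [Fintype (latQuot L)] (hEven : IsEvenLattice L)
    (hspan : Submodule.span ℝ (L : Set (Fin n → ℝ)) = ⊤) {M : Matrix (latQuot L) (latQuot L) ℂ}
    (hM : M * Smat L = Smat L * M) (a y : latQuot L) :
    M a y = ((Fintype.card (latQuot L) : ℂ))⁻¹ * ∑ b, ∑ c,
      expTwoPiI (dotR (rep L a) (rep L c)) * M c b *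
        conj (expTwoPiI (dotR (rep L y) (rep L b))) := by
  classical
  have hconj : M = Smat L * M * (Smat L)ᴴ := by
    rw [← hM, Matrix.mul_assoc, Smat_mul_conjTranspose_Smat hEven hspan, Matrix.mul_one]
  conv_lhs => rw [hconj]
  simp only [Matrix.mul_apply, Matrix.conjTranspose_apply, Smat_apply, Complex.star_def, map_mul,
    Complex.conj_ofReal, Finset.mul_sum, Finset.sum_mul, ← sq_ofReal_inv_sqrt_natCast]
  exact Finset.sum_congr rfl fun b _ => Finset.sum_congr rfl fun c _ => by ring

open scoped Classical in
lemma Tmat_apply (a b : latQuot L) :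
    Tmat L a b = if a = b then Complex.exp (Real.pi * Complex.I * dotR (rep L a) (rep L a)
      - Real.pi * Complex.I * n / 12) else 0 := rfl

lemma exists_dotR_rep_sub_of_commute_Tmat [Fintype (latQuot L)]
    {M : Matrix (latQuot L) (latQuot L) ℂ} (hM : M * Tmat L = Tmat L * M) {a b : latQuot L}
    (hab : M a b ≠ 0) :
    ∃ m : ℤ, dotR (rep L a) (rep L a) - dotR (rep L b) (rep L b) = 2 * m := by
  classical
  have h := congrFun (congrFun hM a) b
  simp only [Matrix.mul_apply, Tmat_apply, mul_ite, ite_mul, mul_zero, zero_mul,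
    Finset.sum_ite_eq, Finset.sum_ite_eq', Finset.mem_univ, if_true] at h
  rw [mul_comm, mul_left_inj' hab, Complex.exp_eq_exp_iff_exists_int] at h
  obtain ⟨m, hm⟩ := h
  refine ⟨-m, ?_⟩
  have hpi : (Real.pi : ℂ) * Complex.I ≠ 0 := by simp [Real.pi_ne_zero, Complex.I_ne_zero]
  apply Complex.ofReal_injective
  apply mul_left_cancel₀ hpi
  push_cast
  linear_combination -hm

end ModularMatrices

section Support

variable {n : ℕ} {L : AddSubgroup (Fin n → ℝ)} {Z : latQuot L → latQuot L → ℕ}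

lemma rep_mem_suppSet {a b : latQuot L} (h : Z a b = 1) : (rep L a, rep L b) ∈ suppSet L Z :=
  ⟨rep_mem a, rep_mem b, by rwa [mkQ_rep, mkQ_rep]⟩

lemma mk_mem_suppSet_of_mem (hEven : IsEvenLattice L) (hZ0 : Z 0 0 = 1) {u v : Fin n → ℝ}
    (hu : u ∈ L) (hv : v ∈ L) : (u, v) ∈ suppSet L Z :=
  ⟨hEven.le_dualLattice hu, hEven.le_dualLattice hv, by
    rwa [(mkQ_eq_zero_iff _).2 hu, (mkQ_eq_zero_iff _).2 hv]⟩

lemma add_mem_suppSet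
    (hadd : ∀ u v u' v' : latQuot L, Z u v = 1 → Z u' v' = 1 → Z (u + u') (v + v') = 1)
    {p q : (Fin n → ℝ) × (Fin n → ℝ)} (hp : p ∈ suppSet L Z) (hq : q ∈ suppSet L Z) :
    p + q ∈ suppSet L Z := by
  obtain ⟨hp₁, hp₂, hp⟩ := hp
  obtain ⟨hq₁, hq₂, hq⟩ := hq
  exact ⟨add_mem hp₁ hq₁, add_mem hp₂ hq₂, hadd _ _ _ _ hp hq⟩

lemma neg_mem_suppSet [Finite (latQuot L)] (hZ0 : Z 0 0 = 1)
    (hadd : ∀ u v u' v' : latQuot L, Z u v = 1 → Z u' v' = 1 → Z (u + u') (v + v') = 1)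
    {p : (Fin n → ℝ) × (Fin n → ℝ)} (hp : p ∈ suppSet L Z) : -p ∈ suppSet L Z := by
  obtain ⟨hp₁, hp₂, hp⟩ := hp
  let S : AddSubmonoid (latQuot L × latQuot L) :=
    { carrier := {a | Z a.1 a.2 = 1}
      add_mem' := fun ha hb => hadd _ _ _ _ ha hb
      zero_mem' := hZ0 }
  exact ⟨neg_mem hp₁, neg_mem hp₂, S.neg_mem_of_finite (p := (_, _)) hp⟩

def suppAddSubgroup [Finite (latQuot L)] (hEven : IsEvenLattice L) (hZ0 : Z 0 0 = 1)
    (hadd : ∀ u v u' v' : latQuot L, Z u v = 1 → Z u' v' = 1 → Z (u + u') (v + v') = 1) :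
    AddSubgroup ((Fin n → ℝ) × (Fin n → ℝ)) where
  carrier := suppSet L Z
  add_mem' := add_mem_suppSet hadd
  zero_mem' := mk_mem_suppSet_of_mem hEven hZ0 (zero_mem L) (zero_mem L)
  neg_mem' := neg_mem_suppSet hZ0 hadd

lemma hform_self_even_of_mem_suppSet [Fintype (latQuot L)] (hEven : IsEvenLattice L)
    (hZT : (Matrix.of fun x y => (Z x y : ℂ)) * Tmat L = Tmat L * Matrix.of fun x y => (Z x y : ℂ))
    {p : (Fin n → ℝ) × (Fin n → ℝ)} (hp : p ∈ suppSet L Z) : ∃ m : ℤ, hform p p = 2 * m := by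
  obtain ⟨hp₁, hp₂, hp⟩ := hp
  obtain ⟨m, hm⟩ := exists_dotR_rep_sub_of_commute_Tmat hZT
    (a := mkQ L ⟨p.1, hp₁⟩) (b := mkQ L ⟨p.2, hp₂⟩) (by simp [hp])
  obtain ⟨m₁, hm₁⟩ := hEven.exists_dotR_self_sub_dotR_self (rep_mem _)
    (u := p.1) (by rw [← neg_sub]; exact neg_mem (rep_mkQ_sub_mem ⟨p.1, hp₁⟩))
  obtain ⟨m₂, hm₂⟩ := hEven.exists_dotR_self_sub_dotR_self (rep_mem _)
    (u := p.2) (by rw [← neg_sub]; exact neg_mem (rep_mkQ_sub_mem ⟨p.2, hp₂⟩))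
  exact ⟨m + m₁ - m₂, by rw [hform]; push_cast; linarith⟩

lemma hform_int_of_mem_suppSet [Fintype (latQuot L)] (hEven : IsEvenLattice L)
    (hZT : (Matrix.of fun x y => (Z x y : ℂ)) * Tmat L = Tmat L * Matrix.of fun x y => (Z x y : ℂ))
    (hadd : ∀ u v u' v' : latQuot L, Z u v = 1 → Z u' v' = 1 → Z (u + u') (v + v') = 1)
    {p q : (Fin n → ℝ) × (Fin n → ℝ)} (hp : p ∈ suppSet L Z) (hq : q ∈ suppSet L Z) :
    ∃ m : ℤ, hform p q = m :=
  exists_intCast_eq_of_add_two_mul_add (hform_self_even_of_mem_suppSet hEven hZT hp)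
    (hform_self_even_of_mem_suppSet hEven hZT hq)
    (by
      rw [← hform_add_self]
      exact hform_self_even_of_mem_suppSet hEven hZT (add_mem_suppSet hadd hp hq))

lemma mk_mem_suppSet_of_forall_hform_int [Fintype (latQuot L)] (hEven : IsEvenLattice L)
    (hspan : Submodule.span ℝ (L : Set (Fin n → ℝ)) = ⊤)
    (hZS : (Matrix.of fun x y => (Z x y : ℂ)) * Smat L = Smat L * Matrix.of fun x y => (Z x y : ℂ))
    (hZ0 : Z 0 0 = 1) (h01 : ∀ x y, Z x y = 0 ∨ Z x y = 1) {x y : Fin n → ℝ}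
    (hx : x ∈ dualLattice L) (hy : y ∈ dualLattice L)
    (hxy : ∀ p ∈ suppSet L Z, ∃ m : ℤ, hform (x, y) p = m) : (x, y) ∈ suppSet L Z := by
  have hentry (x y : dualLattice L)
      (hxy : ∀ p ∈ suppSet L Z, ∃ m : ℤ, hform ((x : Fin n → ℝ), (y : Fin n → ℝ)) p = m) :
      (Z (mkQ L x) (mkQ L y) : ℂ) =
        ((Fintype.card (latQuot L) : ℂ))⁻¹ * ∑ b, ∑ c, (Z c b : ℂ) := by
    have h := apply_eq_sum_of_commute_Smat hEven hspan hZS (mkQ L x) (mkQ L y)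
    simp only [Matrix.of_apply] at h
    rw [h]
    congr 1
    refine Finset.sum_congr rfl fun b _ => Finset.sum_congr rfl fun c _ => ?_
    rcases h01 c b with h | h
    · simp [h]
    obtain ⟨m, hm⟩ := hxy _ (rep_mem_suppSet h)
    rw [h, expTwoPiI_dotR_rep_mkQ x (rep_mem c), expTwoPiI_dotR_rep_mkQ y (rep_mem b),
      Nat.cast_one, mul_one, ← expTwoPiI_sub]
    exact (expTwoPiI_eq_one_iff _).2 ⟨m, hm⟩
  have h0 := hentry 0 0 fun p _ => ⟨0, by simp [hform, dotR]⟩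
  rw [mkQ_zero, hZ0, Nat.cast_one] at h0
  exact ⟨hx, hy, by exact_mod_cast (hentry ⟨x, hx⟩ ⟨y, hy⟩ hxy).trans h0.symm⟩

lemma suppSet_eq_setOf_forall_hform_int [Fintype (latQuot L)] (hEven : IsEvenLattice L)
    (hspan : Submodule.span ℝ (L : Set (Fin n → ℝ)) = ⊤)
    (hZS : (Matrix.of fun x y => (Z x y : ℂ)) * Smat L = Smat L * Matrix.of fun x y => (Z x y : ℂ))
    (hZT : (Matrix.of fun x y => (Z x y : ℂ)) * Tmat L = Tmat L * Matrix.of fun x y => (Z x y : ℂ))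
    (hZ0 : Z 0 0 = 1) (h01 : ∀ x y, Z x y = 0 ∨ Z x y = 1)
    (hadd : ∀ u v u' v' : latQuot L, Z u v = 1 → Z u' v' = 1 → Z (u + u') (v + v') = 1) :
    suppSet L Z = {q | ∀ p ∈ suppSet L Z, ∃ m : ℤ, hform q p = m} := by
  refine Set.Subset.antisymm (fun q hq p hp => hform_int_of_mem_suppSet hEven hZT hadd hq hp)
    fun q hq => ?_
  have hq₁ : q.1 ∈ dualLattice L := fun l hl => by
    simpa [hform, dotR_eq_dotProduct] using
      hq (l, 0) (mk_mem_suppSet_of_mem hEven hZ0 hl (zero_mem L))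
  have hq₂ : q.2 ∈ dualLattice L := fun l hl => by
    obtain ⟨m, hm⟩ := hq (0, l) (mk_mem_suppSet_of_mem hEven hZ0 (zero_mem L) hl)
    simp only [hform, dotR_eq_dotProduct, dotProduct_zero, zero_sub] at hm
    exact ⟨-m, by rw [dotR_eq_dotProduct, Int.cast_neg, ← hm, neg_neg]⟩
  exact mk_mem_suppSet_of_forall_hform_int hEven hspan hZS hZ0 h01 hq₁ hq₂ hq

end Support

theorem stmt_2_general {n : ℕ} (L : AddSubgroup (Fin n → ℝ))
    (hEven : IsEvenLattice L)
    (hspan : Submodule.span ℝ (L : Set (Fin n → ℝ)) = ⊤)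
    [Fintype (latQuot L)]
    (Z : latQuot L → latQuot L → ℕ)
    (hZS : (Matrix.of fun x y => (Z x y : ℂ)) * Smat L
          = Smat L * Matrix.of fun x y => (Z x y : ℂ))
    (hZT : (Matrix.of fun x y => (Z x y : ℂ)) * Tmat L
          = Tmat L * Matrix.of fun x y => (Z x y : ℂ))
    (hZ0 : Z 0 0 = 1)
    (h01 : ∀ x y, Z x y = 0 ∨ Z x y = 1)
    (hadd : ∀ u v u' v' : latQuot L,
      Z u v = 1 → Z u' v' = 1 → Z (u + u') (v + v') = 1) :
    (∃ 𝓛 : AddSubgroup ((Fin n → ℝ) × (Fin n → ℝ)),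
        (𝓛 : Set ((Fin n → ℝ) × (Fin n → ℝ))) = suppSet L Z) ∧
    (∀ u ∈ L, ∀ v ∈ L, (u, v) ∈ suppSet L Z) ∧
    (∀ p ∈ suppSet L Z, ∃ m : ℤ, hform p p = 2 * m) ∧
    suppSet L Z = {q | ∀ p ∈ suppSet L Z, ∃ m : ℤ, hform q p = m} :=
  ⟨⟨suppAddSubgroup hEven hZ0 hadd, rfl⟩,
    fun _ hu _ hv => mk_mem_suppSet_of_mem hEven hZ0 hu hv,
    fun _ hp => hform_self_even_of_mem_suppSet hEven hZT hp,
    suppSet_eq_setOf_forall_hform_int hEven hspan hZS hZT hZ0 h01 hadd⟩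

/-- the support lattice of a torus modular invariant is an even
self-dual lattice in `ℝ^{n,n}` containing `(L;L)`. -/
theorem stmt_2 {n : ℕ} (L : AddSubgroup (Fin n → ℝ))
    (hEven : IsEvenLattice L) (hLL : L ≤ dualLattice L)
    (hspan : Submodule.span ℝ (L : Set (Fin n → ℝ)) = ⊤)
    [Fintype (latQuot L)]
    (Z : latQuot L → latQuot L → ℕ)
    (hZS : (Matrix.of fun x y => (Z x y : ℂ)) * Smat L
          = Smat L * Matrix.of fun x y => (Z x y : ℂ))
    (hZT : (Matrix.of fun x y => (Z x y : ℂ)) * Tmat L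
          = Tmat L * Matrix.of fun x y => (Z x y : ℂ))
    (hZ0 : Z 0 0 = 1)
    (h01 : ∀ x y, Z x y = 0 ∨ Z x y = 1)
    (hadd : ∀ u v u' v' : latQuot L,
      Z u v = 1 → Z u' v' = 1 → Z (u + u') (v + v') = 1) :
    (∃ 𝓛 : AddSubgroup ((Fin n → ℝ) × (Fin n → ℝ)),
        (𝓛 : Set ((Fin n → ℝ) × (Fin n → ℝ))) = suppSet L Z) ∧
    (∀ u ∈ L, ∀ v ∈ L, (u, v) ∈ suppSet L Z) ∧
    (∀ p ∈ suppSet L Z, ∃ m : ℤ, hform p p = 2 * m) ∧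
    suppSet L Z = {q | ∀ p ∈ suppSet L Z, ∃ m : ℤ, hform q p = m} :=
  stmt_2_general L hEven hspan Z hZS hZT hZ0 h01 hadd

end
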